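/- arXiv:1907.11120 — 6 statements merged into one kernel-verified Lean document; each statement's English description precedes it below -/
import Mathlib

section
/- Let Γ ⊆ Sym({1,…,n}) be a permutation group and let v, v̄ be irreducible Γ-arrangements of n points in ℝ^d with matrices M, M̄. If det(v,v̄) = det(M̄ᵀM) = 0, then the arrangement spaces of v and v̄ are orthogonal subspaces of ℝ^n. -/
/-!
Let `T`, `T'` represent `v`, `w` and put `X = M_wᵀ M_v`. Permuting the points of both
arrangements by the same `φ` does not change `X`, which reads `T'_φ X T_φᵀ = X`; as `T_φ` is
orthogonal, `X` intertwines `T` with `T'`. Schur's lemma: the kernel of `X` is `T`-invariant and,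
since `det X = 0`, nonzero, so by irreducibility of `T` it is everything and `X = 0`. The entries
of `X` are the inner products of the columns of `M_v` with those of `M_w`.
-/

open Matrix

/-- The matrix of an arrangement of `n` points in `ℝ^d`: the `i`-th row is the point `v i`. -/
def arrMat {n d : ℕ} (v : Fin n → Fin d → ℝ) : Matrix (Fin n) (Fin d) ℝ := Matrix.of v

/-- An arrangement is normalized if `MᵀM` is the identity matrix. -/
def IsNormalized {n d : ℕ} (v : Fin n → Fin d → ℝ) : Prop :=
  (arrMat v)ᵀ * arrMat v = 1

/-- The arrangement space of `v`: the column span of its matrix, a subspace of `ℝ^n`. -/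
def arrSpace {n d : ℕ} (v : Fin n → Fin d → ℝ) : Submodule ℝ (Fin n → ℝ) :=
  Submodule.span ℝ (Set.range (arrMat v)ᵀ)

/-- `detPair v w = det (M_wᵀ * M_v)`, i.e. `det(v, w̄) = det(M̄ᵀ M)` with `w` playing `v̄`. -/
noncomputable def detPair {n d : ℕ} (v w : Fin n → Fin d → ℝ) : ℝ :=
  ((arrMat w)ᵀ * arrMat v).det

/-- Two subspaces `U, W ⊆ ℝ^n` are orthogonal if `⟨u, w⟩ = 0` for all `u ∈ U`, `w ∈ W`. -/
def OrthSpaces {n : ℕ} (U W : Submodule ℝ (Fin n → ℝ)) : Prop :=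
  ∀ u ∈ U, ∀ w ∈ W, u ⬝ᵥ w = 0

/-- Arrangements are equivalent if related by an invertible linear map `X`. -/
def AreEquivalent {n d : ℕ} (v w : Fin n → Fin d → ℝ) : Prop :=
  ∃ X : Matrix (Fin d) (Fin d) ℝ, X.det ≠ 0 ∧ ∀ i, X.mulVec (v i) = w i

/-- Arrangements are positively equivalent if related by a linear map of positive determinant. -/
def PosEquivalent {n d : ℕ} (v w : Fin n → Fin d → ℝ) : Prop :=
  ∃ X : Matrix (Fin d) (Fin d) ℝ, 0 < X.det ∧ ∀ i, X.mulVec (v i) = w i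

/-- `T : Γ → O(ℝ^d)` is a representation: orthogonal values and multiplicative. -/
def IsRep {n d : ℕ} (Γ : Subgroup (Equiv.Perm (Fin n)))
    (T : Γ → Matrix (Fin d) (Fin d) ℝ) : Prop :=
  (∀ φ, (T φ)ᵀ * T φ = 1) ∧ (∀ φ ψ, T (φ * ψ) = T φ * T ψ)

/-- `T` is a representation of the arrangement `v`: `T_φ v_i = v_{φ(i)}`. -/
def IsRepOf {n d : ℕ} (Γ : Subgroup (Equiv.Perm (Fin n)))
    (T : Γ → Matrix (Fin d) (Fin d) ℝ) (v : Fin n → Fin d → ℝ) : Prop :=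
  IsRep Γ T ∧ ∀ (φ : Γ) (i : Fin n), (T φ).mulVec (v i) = v (φ.val i)

/-- `v` is a `Γ`-arrangement if it has a representation. -/
def IsGammaArr {n d : ℕ} (Γ : Subgroup (Equiv.Perm (Fin n)))
    (v : Fin n → Fin d → ℝ) : Prop :=
  ∃ T : Γ → Matrix (Fin d) (Fin d) ℝ, IsRepOf Γ T v

/-- A representation is irreducible if the only invariant subspaces of `ℝ^d` are `⊥` and `⊤`. -/
def IrredRep {n d : ℕ} (Γ : Subgroup (Equiv.Perm (Fin n)))
    (T : Γ → Matrix (Fin d) (Fin d) ℝ) : Prop :=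
  ∀ W : Submodule ℝ (Fin d → ℝ), (∀ (φ : Γ), ∀ x ∈ W, (T φ).mulVec x ∈ W) → W = ⊥ ∨ W = ⊤

/-- Representations are isomorphic: an invertible equivariant map exists. -/
def IsoReps {n d : ℕ} (Γ : Subgroup (Equiv.Perm (Fin n)))
    (T T' : Γ → Matrix (Fin d) (Fin d) ℝ) : Prop :=
  ∃ R : Matrix (Fin d) (Fin d) ℝ, R.det ≠ 0 ∧ ∀ φ, R * T φ = T' φ * R

/-- Representations are positively isomorphic: an equivariant map with positive determinant. -/
def PosIsoReps {n d : ℕ} (Γ : Subgroup (Equiv.Perm (Fin n)))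
    (T T' : Γ → Matrix (Fin d) (Fin d) ℝ) : Prop :=
  ∃ R : Matrix (Fin d) (Fin d) ℝ, 0 < R.det ∧ ∀ φ, R * T φ = T' φ * R

/-- `S_d(Γ)`: the set of normalized `Γ`-arrangements of `n` points in `ℝ^d`. -/
def SdSet (n d : ℕ) (Γ : Subgroup (Equiv.Perm (Fin n))) : Set (Fin n → Fin d → ℝ) :=
  {v | IsNormalized v ∧ IsGammaArr Γ v}

/-- Deformation equivalence: a continuous path in `S_d(Γ)` from `v` to `w`. -/
def DeformEquiv {n d : ℕ} (Γ : Subgroup (Equiv.Perm (Fin n)))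
    (v w : Fin n → Fin d → ℝ) : Prop :=
  ∃ c : ℝ → (Fin n → Fin d → ℝ), ContinuousOn c (Set.Icc 0 1) ∧
    (∀ t ∈ Set.Icc (0:ℝ) 1, c t ∈ SdSet n d Γ) ∧ c 0 = v ∧ c 1 = w

/-- `v` is flexible if it can be deformed into some non-equivalent arrangement. -/
def Flexible {n d : ℕ} (Γ : Subgroup (Equiv.Perm (Fin n))) (v : Fin n → Fin d → ℝ) : Prop :=
  ∃ w : Fin n → Fin d → ℝ, DeformEquiv Γ v w ∧ ¬ AreEquivalent v w

/-- A subspace `W ⊆ ℝ^n` is `Γ`-invariant (under the permutation action). -/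
def GammaInvariant {n : ℕ} (Γ : Subgroup (Equiv.Perm (Fin n)))
    (W : Submodule ℝ (Fin n → ℝ)) : Prop :=
  ∀ (φ : Γ), ∀ x ∈ W, (fun i => x (φ.val⁻¹ i)) ∈ W

section Arrangement

variable {n d : ℕ}

lemma arrMat_mul_transpose_eq {A : Matrix (Fin d) (Fin d) ℝ} {v : Fin n → Fin d → ℝ}
    {σ : Equiv.Perm (Fin n)} (hA : ∀ i, A *ᵥ v i = v (σ i)) :
    arrMat v * Aᵀ = arrMat (fun i => v (σ i)) := by
  ext i j
  simp only [arrMat, of_apply, mul_apply, transpose_apply, ← hA i, mulVec, dotProduct, mul_comm]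

lemma transpose_arrMat_mul_arrMat_comp_perm (v w : Fin n → Fin d → ℝ) (σ : Equiv.Perm (Fin n)) :
    (arrMat fun i => w (σ i))ᵀ * arrMat (fun i => v (σ i)) = (arrMat w)ᵀ * arrMat v := by
  ext a b
  simp only [mul_apply, transpose_apply, arrMat, of_apply]
  exact Fintype.sum_equiv σ _ _ fun _ => rfl

lemma transpose_arrMat_mul_arrMat_intertwines {A B : Matrix (Fin d) (Fin d) ℝ}
    {v w : Fin n → Fin d → ℝ} {σ : Equiv.Perm (Fin n)} (hA : Aᵀ * A = 1)
    (hAv : ∀ i, A *ᵥ v i = v (σ i)) (hBw : ∀ i, B *ᵥ w i = w (σ i)) :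
    (arrMat w)ᵀ * arrMat v * A = B * ((arrMat w)ᵀ * arrMat v) := by
  have hconj : B * ((arrMat w)ᵀ * arrMat v) * Aᵀ = (arrMat w)ᵀ * arrMat v := by
    calc B * ((arrMat w)ᵀ * arrMat v) * Aᵀ = (arrMat w * Bᵀ)ᵀ * (arrMat v * Aᵀ) := by
          simp only [transpose_mul, transpose_transpose, Matrix.mul_assoc]
      _ = (arrMat w)ᵀ * arrMat v := by
          rw [arrMat_mul_transpose_eq hAv, arrMat_mul_transpose_eq hBw,
            transpose_arrMat_mul_arrMat_comp_perm]
  nth_rewrite 1 [← hconj]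
  rw [Matrix.mul_assoc _ Aᵀ, hA, Matrix.mul_one]

lemma orthSpaces_span {s t : Set (Fin n → ℝ)} (h : ∀ x ∈ s, ∀ y ∈ t, x ⬝ᵥ y = 0) :
    OrthSpaces (Submodule.span ℝ s) (Submodule.span ℝ t) := by
  intro x hx y hy
  induction hx using Submodule.span_induction with
  | mem x hx =>
    induction hy using Submodule.span_induction with
    | mem y hy => exact h x hx y hy
    | zero => exact dotProduct_zero x
    | add y z _ _ hy hz => rw [dotProduct_add, hy, hz, add_zero]
    | smul c y _ hy => rw [dotProduct_smul, hy, smul_zero]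
  | zero => exact zero_dotProduct y
  | add x z _ _ hx hz => rw [add_dotProduct, hx, hz, add_zero]
  | smul c x _ hx => rw [smul_dotProduct, hx, smul_zero]

lemma orthSpaces_arrSpace_of_transpose_mul_eq_zero {v w : Fin n → Fin d → ℝ}
    (h : (arrMat w)ᵀ * arrMat v = 0) : OrthSpaces (arrSpace v) (arrSpace w) := by
  refine orthSpaces_span ?_
  rintro _ ⟨j, rfl⟩ _ ⟨k, rfl⟩
  simpa only [mul_apply, dotProduct, transpose_apply, Matrix.zero_apply, mul_comm] using
    congrFun (congrFun h k) j

end Arrangement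

lemma eq_zero_of_intertwines_of_det_eq_zero {n d : ℕ} {Γ : Subgroup (Equiv.Perm (Fin n))}
    {T T' : Γ → Matrix (Fin d) (Fin d) ℝ} {X : Matrix (Fin d) (Fin d) ℝ} (hT : IrredRep Γ T)
    (hX : ∀ φ, X * T φ = T' φ * X) (hdet : X.det = 0) : X = 0 := by
  obtain ⟨x, hx0, hx⟩ := exists_mulVec_eq_zero_iff.mpr hdet
  have hinv : ∀ φ, ∀ y ∈ LinearMap.ker X.mulVecLin, T φ *ᵥ y ∈ LinearMap.ker X.mulVecLin := by
    intro φ y hy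
    rw [LinearMap.mem_ker, mulVecLin_apply] at hy ⊢
    rw [mulVec_mulVec, hX, ← mulVec_mulVec, hy, mulVec_zero]
  rcases hT _ hinv with hbot | htop
  · exact absurd (hbot ▸ hx : x ∈ (⊥ : Submodule ℝ _)) hx0
  · refine ext_iff_mulVec.mpr fun y => ?_
    rw [zero_mulVec]
    exact (htop ▸ Submodule.mem_top : y ∈ LinearMap.ker X.mulVecLin)

theorem stmt2 {n d : ℕ} (Γ : Subgroup (Equiv.Perm (Fin n))) (v w : Fin n → Fin d → ℝ)
    (hv : ∃ T : Γ → Matrix (Fin d) (Fin d) ℝ, IsRepOf Γ T v ∧ IrredRep Γ T)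
    (hw : ∃ T : Γ → Matrix (Fin d) (Fin d) ℝ, IsRepOf Γ T w ∧ IrredRep Γ T)
    (h0 : detPair v w = 0) :
    OrthSpaces (arrSpace v) (arrSpace w) := by
  obtain ⟨T, ⟨⟨hTo, -⟩, hTv⟩, hTirr⟩ := hv
  obtain ⟨T', ⟨-, hT'w⟩, -⟩ := hw
  apply orthSpaces_arrSpace_of_transpose_mul_eq_zero
  exact eq_zero_of_intertwines_of_det_eq_zero hTirr
    (fun φ => transpose_arrMat_mul_arrMat_intertwines (hTo φ) (hTv φ) (hT'w φ)) h0
end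

section
/- Let Γ ⊆ Sym({1,…,n}) be a permutation group and let v, v̄ be Γ-arrangements of n points in ℝ^d with matrices M, M̄ and representations T, T̄ respectively. If det(v,v̄) = det(M̄ᵀM) ≠ 0, then T and T̄ are isomorphic; if det(v,v̄) > 0, then T and T̄ are positively isomorphic. -/
open Matrix

/-
The intertwiner is the "cross Gram matrix" `R = M̄ᵀ M` itself, so its determinant is `det(v, v̄)`.
The relation `T_φ v_i = v_{φ(i)}` says `M T_φᵀ` is `M` with its rows permuted by `φ`, and
permuting the rows of both factors does not change `M̄ᵀ M`. Hence `R = T̄_φ R T_φᵀ`, and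
orthogonality of `T_φ` turns this into `R T_φ = T̄_φ R`.
-/

lemma arrMat_mul_transpose_eq_submatrix {n d : ℕ} {v : Fin n → Fin d → ℝ}
    {A : Matrix (Fin d) (Fin d) ℝ} {σ : Fin n → Fin n} (h : ∀ i, A *ᵥ v i = v (σ i)) :
    arrMat v * Aᵀ = (arrMat v).submatrix σ id := by
  ext i a
  rw [submatrix_apply, id, arrMat, of_apply, ← h i, mulVec, dotProduct, mul_apply]
  simp only [of_apply, transpose_apply, mul_comm]

lemma transpose_submatrix_mul_submatrix {α m k l : Type*} [Fintype m] [AddCommMonoid α] [Mul α]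
    (N : Matrix m k α) (M : Matrix m l α) (σ : m ≃ m) :
    (N.submatrix σ id)ᵀ * M.submatrix σ id = Nᵀ * M := by
  rw [transpose_submatrix, submatrix_mul_equiv, submatrix_id_id]

lemma crossGram_mul_eq_mul_crossGram {n d : ℕ} {v w : Fin n → Fin d → ℝ}
    {A B : Matrix (Fin d) (Fin d) ℝ} (σ : Equiv.Perm (Fin n)) (hA : Aᵀ * A = 1)
    (hv : ∀ i, A *ᵥ v i = v (σ i)) (hw : ∀ i, B *ᵥ w i = w (σ i)) :
    (arrMat w)ᵀ * arrMat v * A = B * ((arrMat w)ᵀ * arrMat v) := by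
  have hR : (arrMat w)ᵀ * arrMat v = B * ((arrMat w)ᵀ * arrMat v) * Aᵀ := by
    calc (arrMat w)ᵀ * arrMat v
        = ((arrMat w).submatrix σ id)ᵀ * (arrMat v).submatrix σ id :=
          (transpose_submatrix_mul_submatrix _ _ σ).symm
      _ = (arrMat w * Bᵀ)ᵀ * (arrMat v * Aᵀ) := by
          rw [arrMat_mul_transpose_eq_submatrix hv, arrMat_mul_transpose_eq_submatrix hw]
      _ = B * ((arrMat w)ᵀ * arrMat v) * Aᵀ := by
          rw [transpose_mul, transpose_transpose]; simp only [Matrix.mul_assoc]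
  calc (arrMat w)ᵀ * arrMat v * A
      = B * ((arrMat w)ᵀ * arrMat v) * (Aᵀ * A) := by
        conv_lhs => rw [hR]
        simp only [Matrix.mul_assoc]
    _ = B * ((arrMat w)ᵀ * arrMat v) := by rw [hA, Matrix.mul_one]

theorem stmt3 {n d : ℕ} (Γ : Subgroup (Equiv.Perm (Fin n))) (v w : Fin n → Fin d → ℝ)
    (T T' : Γ → Matrix (Fin d) (Fin d) ℝ)
    (hT : IsRepOf Γ T v) (hT' : IsRepOf Γ T' w) :
    (detPair v w ≠ 0 → IsoReps Γ T T') ∧ (0 < detPair v w → PosIsoReps Γ T T') := by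
  have intertwines : ∀ φ, (arrMat w)ᵀ * arrMat v * T φ = T' φ * ((arrMat w)ᵀ * arrMat v) :=
    fun φ => crossGram_mul_eq_mul_crossGram φ.val (hT.1.1 φ) (hT.2 φ) (hT'.2 φ)
  exact ⟨fun h => ⟨_, h, intertwines⟩, fun h => ⟨_, h, intertwines⟩⟩
end

section
/- Let Γ ⊆ Sym({1,…,n}) be a permutation group and let v, v̄ ∈ S_d(Γ) be irreducible. If the arrangement spaces of v and v̄ are not orthogonal subspaces of ℝ^n, then the representations of v and v̄ are isomorphic. -/
open Matrix

/-!
The matrix `R = M̄ᵀ M = ∑ᵢ v̄ᵢ vᵢᵀ` intertwines `T` and `T̄`: both arrangements are permuted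
in the same way by `φ`, and `T_φ` is orthogonal, so `R T_φ = T̄_φ R`. The entries of `R` are the
inner products of the columns of `M̄` and `M`, hence `R ≠ 0` as the arrangement spaces are not
orthogonal. By Schur's lemma the `T`-invariant kernel of `R` is trivial, so the square matrix `R`
is invertible.
-/

section

variable {ι κ κ' R : Type*} [Fintype κ] [Fintype κ'] [CommRing R]

theorem mul_transpose_eq_submatrix_of_mulVec {M : Matrix ι κ R} {A : Matrix κ κ R}
    {σ : Equiv.Perm ι} (h : ∀ i, A *ᵥ M i = M (σ i)) : M * Aᵀ = M.submatrix σ id := by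
  ext i j
  rw [submatrix_apply, id, ← h i, mulVec, mul_apply', dotProduct_comm]
  rfl

variable [Fintype ι]

theorem dotProduct_eq_zero_of_mem_span {s t : Set (ι → R)}
    (h : ∀ x ∈ s, ∀ y ∈ t, x ⬝ᵥ y = 0) {x y : ι → R}
    (hx : x ∈ Submodule.span R s) (hy : y ∈ Submodule.span R t) : x ⬝ᵥ y = 0 := by
  induction hx, hy using Submodule.span_induction₂ with
  | mem_mem x y hx hy => exact h x hx y hy
  | zero_left => exact zero_dotProduct _
  | zero_right => exact dotProduct_zero _
  | add_left x y z _ _ _ hxz hyz => rw [add_dotProduct, hxz, hyz, add_zero]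
  | add_right x y z _ _ _ hxy hxz => rw [dotProduct_add, hxy, hxz, add_zero]
  | smul_left r x y _ _ hxy => rw [smul_dotProduct, hxy, smul_zero]
  | smul_right r x y _ _ hxy => rw [dotProduct_smul, hxy, smul_zero]

theorem transpose_mul_mul_eq_mul_transpose_mul [DecidableEq κ] {M : Matrix ι κ R}
    {N : Matrix ι κ' R} {A : Matrix κ κ R} {B : Matrix κ' κ' R} (σ : Equiv.Perm ι) (hA : Aᵀ * A = 1)
    (hM : M * Aᵀ = M.submatrix σ id) (hN : N * Bᵀ = N.submatrix σ id) :
    Nᵀ * M * A = B * (Nᵀ * M) := by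
  have hM' : M.submatrix σ id * A = M := by rw [← hM, Matrix.mul_assoc, hA, Matrix.mul_one]
  have hN' : B * Nᵀ = Nᵀ.submatrix id σ := by
    rw [← transpose_transpose B, ← transpose_mul, hN, transpose_submatrix]
  calc Nᵀ * M * A = Nᵀ.submatrix id σ * M.submatrix σ id * A := by
        rw [submatrix_mul_equiv, submatrix_id_id]
    _ = B * (Nᵀ * M) := by rw [Matrix.mul_assoc, hM', ← hN', Matrix.mul_assoc]

end

theorem orthSpaces_of_transpose_mul_eq_zero {n d : ℕ} {v w : Fin n → Fin d → ℝ}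
    (h : (arrMat w)ᵀ * arrMat v = 0) : OrthSpaces (arrSpace v) (arrSpace w) := by
  refine fun x hx y hy => dotProduct_eq_zero_of_mem_span ?_ hx hy
  rintro _ ⟨b, rfl⟩ _ ⟨a, rfl⟩
  rw [dotProduct_comm]
  exact (mul_apply' ..).symm.trans (congr_fun₂ h a b)

theorem det_ne_zero_of_intertwines {n d : ℕ} {Γ : Subgroup (Equiv.Perm (Fin n))}
    {T T' : Γ → Matrix (Fin d) (Fin d) ℝ} {R : Matrix (Fin d) (Fin d) ℝ} (hT : IrredRep Γ T)
    (hR : R ≠ 0) (hRT : ∀ φ, R * T φ = T' φ * R) : R.det ≠ 0 := by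
  have hker : ∀ φ, ∀ x ∈ LinearMap.ker (toLin' R), T φ *ᵥ x ∈ LinearMap.ker (toLin' R) := by
    intro φ x hx
    rw [LinearMap.mem_ker, toLin'_apply] at hx ⊢
    rw [mulVec_mulVec, hRT, ← mulVec_mulVec, hx, mulVec_zero]
  rcases hT _ hker with hbot | htop
  · intro hdet
    obtain ⟨x, hx0, hx⟩ := exists_mulVec_eq_zero_iff.mpr hdet
    exact hx0 (LinearMap.ker_eq_bot'.mp hbot x (by rwa [toLin'_apply]))
  · exact absurd (toLin'.map_eq_zero_iff.mp (LinearMap.ker_eq_top.mp htop)) hR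

theorem stmt4_general {n d : ℕ} (Γ : Subgroup (Equiv.Perm (Fin n))) (v w : Fin n → Fin d → ℝ)
    (T T' : Γ → Matrix (Fin d) (Fin d) ℝ)
    (hT : IsRepOf Γ T v) (hTirr : IrredRep Γ T)
    (hT' : IsRepOf Γ T' w)
    (h : ¬ OrthSpaces (arrSpace v) (arrSpace w)) :
    IsoReps Γ T T' := by
  obtain ⟨⟨hTorth, -⟩, hTv⟩ := hT
  obtain ⟨-, hT'w⟩ := hT'
  have hRT : ∀ φ, (arrMat w)ᵀ * arrMat v * T φ = T' φ * ((arrMat w)ᵀ * arrMat v) := fun φ =>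
    transpose_mul_mul_eq_mul_transpose_mul φ.val (hTorth φ)
      (mul_transpose_eq_submatrix_of_mulVec (hTv φ)) (mul_transpose_eq_submatrix_of_mulVec (hT'w φ))
  have hR : (arrMat w)ᵀ * arrMat v ≠ 0 := fun h0 => h (orthSpaces_of_transpose_mul_eq_zero h0)
  exact ⟨_, det_ne_zero_of_intertwines hTirr hR hRT, hRT⟩

theorem stmt4 {n d : ℕ} (Γ : Subgroup (Equiv.Perm (Fin n))) (v w : Fin n → Fin d → ℝ)
    (hv : v ∈ SdSet n d Γ) (hw : w ∈ SdSet n d Γ)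
    (T T' : Γ → Matrix (Fin d) (Fin d) ℝ)
    (hT : IsRepOf Γ T v) (hTirr : IrredRep Γ T)
    (hT' : IsRepOf Γ T' w) (hT'irr : IrredRep Γ T')
    (h : ¬ OrthSpaces (arrSpace v) (arrSpace w)) :
    IsoReps Γ T T' :=
  stmt4_general Γ v w T T' hT hTirr hT' h
end

section
/- Let Γ ⊆ Sym({1,…,n}) be a permutation group and T : Γ → O(ℝ^d) a representation. Then the set S_d⁺(T) = { v ∈ S_d(Γ) : v has a representation positively isomorphic to T } is an open subset of S_d(Γ) (in the subspace topology inherited from (ℝ^d)^n ≅ ℝ^{nd}). -/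
/-!
A normalized arrangement `v` determines its representation, `T^v_φ = M_{φv}ᵀ M_v`, and this
depends continuously on `v`. If `R` intertwines `T` with `T^{v₀}` and `det R > 0`, the average
`A(v) = ∑_φ T^v_φ R T_φ⁻¹` intertwines `T` with `T^v` for every `Γ`-arrangement `v`, depends
continuously on `v`, and equals `|Γ| R` at `v₀`; so `det A(v) > 0` on a neighbourhood of `v₀`.
-/

open Matrix

section Average

variable {G A : Type*} [Group G] [Fintype G] [Semiring A]

def intertwinerAvg (ρ ρ' : G → A) (R : A) : A :=
  ∑ g, ρ' g * R * ρ g⁻¹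

theorem intertwinerAvg_mul (ρ ρ' : G →* A) (R : A) (h : G) :
    intertwinerAvg ρ ρ' R * ρ h = ρ' h * intertwinerAvg ρ ρ' R := by
  simp only [intertwinerAvg, Finset.sum_mul, Finset.mul_sum]
  refine Fintype.sum_equiv (Equiv.mulLeft h⁻¹) _ _ fun g => ?_
  simp only [Equiv.coe_mulLeft, _root_.mul_inv_rev, inv_inv]
  rw [← mul_assoc, ← mul_assoc, ← map_mul, mul_inv_cancel_left, map_mul, mul_assoc]

theorem intertwinerAvg_eq_card_smul (ρ : G →* A) {ρ' : G → A} {R : A}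
    (hR : ∀ g, R * ρ g = ρ' g * R) : intertwinerAvg ρ ρ' R = Fintype.card G • R := by
  simp only [intertwinerAvg, ← hR, mul_assoc, ← map_mul, mul_inv_cancel, map_one, mul_one,
    Finset.sum_const, Finset.card_univ]

end Average

section Arrangement

variable {n d : ℕ} {Γ : Subgroup (Equiv.Perm (Fin n))}

theorem IsRep.map_one {T : Γ → Matrix (Fin d) (Fin d) ℝ} (hT : IsRep Γ T) : T 1 = 1 := by
  have hidem : T 1 * T 1 = T 1 := by rw [← hT.2, one_mul]
  calc T 1 = (T 1)ᵀ * (T 1 * T 1) := by rw [← Matrix.mul_assoc, hT.1, Matrix.one_mul]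
    _ = 1 := by rw [hidem, hT.1]

def IsRep.toMonoidHom {T : Γ → Matrix (Fin d) (Fin d) ℝ} (hT : IsRep Γ T) :
    Γ →* Matrix (Fin d) (Fin d) ℝ where
  toFun := T
  map_one' := hT.map_one
  map_mul' := hT.2

/-- The representation of a normalized arrangement is forced: `T_φ M_vᵀ = M_{φv}ᵀ` and
`M_vᵀ M_v = 1` give `T_φ = M_{φv}ᵀ M_v`. -/
def arrRep (v : Fin n → Fin d → ℝ) (φ : Equiv.Perm (Fin n)) : Matrix (Fin d) (Fin d) ℝ :=
  (arrMat fun i => v (φ i))ᵀ * arrMat v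

@[fun_prop]
theorem continuous_arrRep (φ : Equiv.Perm (Fin n)) :
    Continuous fun v : Fin n → Fin d → ℝ => arrRep v φ := by
  have hM : Continuous (arrMat : (Fin n → Fin d → ℝ) → Matrix (Fin n) (Fin d) ℝ) :=
    continuous_id
  exact ((hM.comp (continuous_pi fun i => continuous_apply (φ i))).matrix_transpose).matrix_mul hM

theorem IsRepOf.eq_arrRep {T : Γ → Matrix (Fin d) (Fin d) ℝ} {v : Fin n → Fin d → ℝ}
    (hN : IsNormalized v) (h : IsRepOf Γ T v) : T = fun φ : Γ => arrRep v φ := by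
  funext φ
  have hT : T φ * (arrMat v)ᵀ = (arrMat fun i => v (φ.val i))ᵀ := by
    ext k i
    simpa [Matrix.mul_apply, Matrix.mulVec, dotProduct, arrMat] using congrFun (h.2 φ i) k
  calc T φ = T φ * ((arrMat v)ᵀ * arrMat v) := by rw [hN, Matrix.mul_one]
    _ = arrRep v φ := by rw [← Matrix.mul_assoc, hT, arrRep]

end Arrangement

theorem stmt5 {n d : ℕ} (Γ : Subgroup (Equiv.Perm (Fin n)))
    (T : Γ → Matrix (Fin d) (Fin d) ℝ) (hT : IsRep Γ T) :
    IsOpen {x : {v : Fin n → Fin d → ℝ // v ∈ SdSet n d Γ} |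
      ∃ T' : Γ → Matrix (Fin d) (Fin d) ℝ, IsRepOf Γ T' x.val ∧ PosIsoReps Γ T T'} := by
  have : Fintype Γ := Fintype.ofFinite Γ
  rw [isOpen_iff_forall_mem_open]
  rintro x₀ ⟨T₀, hT₀, R, hR, hRT⟩
  let avg : (Fin n → Fin d → ℝ) → Matrix (Fin d) (Fin d) ℝ :=
    fun v => intertwinerAvg T (fun φ : Γ => arrRep v φ) R
  refine ⟨{x | 0 < (avg x.val).det}, ?_, ?_, ?_⟩
  · rintro x (hx : 0 < (avg x.val).det)
    obtain ⟨T', hT'⟩ := x.2.2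
    have havg : avg x.val = intertwinerAvg T T' R := by rw [hT'.eq_arrRep x.2.1]
    exact ⟨T', hT', avg x.val, hx, fun φ => by
      rw [havg]; exact intertwinerAvg_mul hT.toMonoidHom hT'.1.toMonoidHom R φ⟩
  · have hcont : Continuous avg := by
      unfold avg intertwinerAvg
      fun_prop
    exact isOpen_lt continuous_const (hcont.comp continuous_subtype_val).matrix_det
  · show 0 < (avg x₀.val).det
    have havg : avg x₀.val = Fintype.card Γ • R := by
      simp only [avg, ← hT₀.eq_arrRep x₀.2.1]
      exact intertwinerAvg_eq_card_smul hT.toMonoidHom hRT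
    rw [havg, ← Nat.cast_smul_eq_nsmul ℝ, Matrix.det_smul]
    exact mul_pos (pow_pos (Nat.cast_pos.mpr Fintype.card_pos) _) hR
end

section
/- Let Γ ⊆ Sym({1,…,n}) be a permutation group. If v, v̄ ∈ S_d(Γ) are deformation equivalent, then the representations of v and v̄ are positively isomorphic. -/
open Matrix

/-!
If `T` and `T'` represent the `Γ`-arrangements `v` and `w`, orthogonality of `T φ` gives
`M_v T_φ = P_φ M_v` for the permutation matrix `P_φ`, so `M_wᵀ M_v` intertwines `T` and `T'`;
its determinant is `detPair v w`. This determinant is continuous in `(v, w)` and equals `1` when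
`v = w` is normalized, so arrangements close to each other on the deformation have positively
isomorphic representations. Positive isomorphism is transitive, and the image of the deformation
is connected, hence the representations at both ends are positively isomorphic.
-/

open Filter Topology

section Intertwiner

variable {n d : ℕ} {Γ : Subgroup (Equiv.Perm (Fin n))}

theorem IsRepOf.transpose_mulVec {T : Γ → Matrix (Fin d) (Fin d) ℝ} {v : Fin n → Fin d → ℝ}
    (hT : IsRepOf Γ T v) (φ : Γ) (i : Fin n) : (T φ)ᵀ *ᵥ v (φ.val i) = v i := by
  rw [← hT.2, mulVec_mulVec, hT.1.1, one_mulVec]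

theorem IsRepOf.arrMat_mul {T : Γ → Matrix (Fin d) (Fin d) ℝ} {v : Fin n → Fin d → ℝ}
    (hT : IsRepOf Γ T v) (φ : Γ) : arrMat v * T φ = of fun i => v (φ.val⁻¹ i) := by
  ext i b
  have := congrFun (hT.transpose_mulVec φ (φ.val⁻¹ i)) b
  rw [Equiv.Perm.coe_inv, Equiv.apply_symm_apply, mulVec_transpose] at this
  simpa [arrMat, vecMul, dotProduct, mul_apply] using this

theorem IsRepOf.mul_arrMat_transpose {T : Γ → Matrix (Fin d) (Fin d) ℝ} {v : Fin n → Fin d → ℝ}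
    (hT : IsRepOf Γ T v) (φ : Γ) : T φ * (arrMat v)ᵀ = (of fun i => v (φ.val i))ᵀ := by
  ext a i
  have := congrFun (hT.2 φ i) a
  simpa [arrMat, mulVec, dotProduct, mul_apply] using this

theorem IsRepOf.arrMat_transpose_mul_arrMat_intertwines {T T' : Γ → Matrix (Fin d) (Fin d) ℝ}
    {v w : Fin n → Fin d → ℝ} (hT : IsRepOf Γ T v) (hT' : IsRepOf Γ T' w) (φ : Γ) :
    (arrMat w)ᵀ * arrMat v * T φ = T' φ * ((arrMat w)ᵀ * arrMat v) := by
  rw [Matrix.mul_assoc, hT.arrMat_mul, ← Matrix.mul_assoc, hT'.mul_arrMat_transpose]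
  ext a b
  simp only [mul_apply, transpose_apply, of_apply, arrMat]
  rw [← Equiv.sum_comp φ.val]
  simp only [Equiv.Perm.coe_inv, Equiv.symm_apply_apply]

theorem posIsoReps_of_detPair_pos {T T' : Γ → Matrix (Fin d) (Fin d) ℝ}
    {v w : Fin n → Fin d → ℝ} (hT : IsRepOf Γ T v) (hT' : IsRepOf Γ T' w)
    (hpos : 0 < detPair v w) : PosIsoReps Γ T T' :=
  ⟨_, hpos, hT.arrMat_transpose_mul_arrMat_intertwines hT'⟩

theorem PosIsoReps.trans {T T' T'' : Γ → Matrix (Fin d) (Fin d) ℝ}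
    (h : PosIsoReps Γ T T') (h' : PosIsoReps Γ T' T'') : PosIsoReps Γ T T'' := by
  obtain ⟨R, hR, hRT⟩ := h
  obtain ⟨R', hR', hRT'⟩ := h'
  refine ⟨R' * R, by rw [det_mul]; positivity, fun φ => ?_⟩
  rw [mul_assoc, hRT, ← mul_assoc, hRT', mul_assoc]

end Intertwiner

section DetPair

variable {n d : ℕ}

theorem detPair_comm (v w : Fin n → Fin d → ℝ) : detPair v w = detPair w v := by
  rw [detPair, detPair, ← det_transpose, transpose_mul, transpose_transpose]

theorem IsNormalized.detPair_self {v : Fin n → Fin d → ℝ} (hv : IsNormalized v) :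
    detPair v v = 1 := by
  rw [detPair, hv, det_one]

theorem continuous_detPair :
    Continuous fun p : (Fin n → Fin d → ℝ) × (Fin n → Fin d → ℝ) => detPair p.1 p.2 := by
  unfold detPair arrMat
  fun_prop

theorem IsNormalized.eventually_detPair_pos {v : Fin n → Fin d → ℝ} (hv : IsNormalized v) :
    ∀ᶠ w in 𝓝 v, 0 < detPair v w ∧ 0 < detPair w v := by
  have hcont : Continuous fun w => detPair v w :=
    continuous_detPair.comp (continuous_const.prodMk continuous_id)
  have hpos : ∀ᶠ w in 𝓝 v, 0 < detPair v w :=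
    hcont.continuousAt (Ioi_mem_nhds (by rw [hv.detPair_self]; exact one_pos))
  filter_upwards [hpos] with w hw
  exact ⟨hw, detPair_comm v w ▸ hw⟩

end DetPair

theorem stmt6_general {n d : ℕ} (Γ : Subgroup (Equiv.Perm (Fin n))) (v w : Fin n → Fin d → ℝ)
    (hdeform : DeformEquiv Γ v w)
    (T T' : Γ → Matrix (Fin d) (Fin d) ℝ)
    (hT : IsRepOf Γ T v) (hT' : IsRepOf Γ T' w) :
    PosIsoReps Γ T T' := by
  obtain ⟨c, hc, hmem, rfl, rfl⟩ := hdeform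
  have hpath : IsPreconnected (c '' Set.Icc (0 : ℝ) 1) := isPreconnected_Icc.image c hc
  refine hpath.induction₂' (fun u u' => ∀ S S', IsRepOf Γ S u → IsRepOf Γ S' u' →
      PosIsoReps Γ S S') ?_ ?_ (Set.mem_image_of_mem c (Set.left_mem_Icc.2 zero_le_one))
    (Set.mem_image_of_mem c (Set.right_mem_Icc.2 zero_le_one)) T T' hT hT'
  · rintro _ ⟨t, ht, rfl⟩
    filter_upwards [nhdsWithin_le_nhds (hmem t ht).1.eventually_detPair_pos] with u hu
    exact ⟨fun S S' hS hS' => posIsoReps_of_detPair_pos hS hS' hu.1,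
      fun S S' hS hS' => posIsoReps_of_detPair_pos hS hS' hu.2⟩
  · rintro u _ u'' - ⟨t, ht, rfl⟩ - huu' hu'u'' S S'' hS hS''
    obtain ⟨S', hS'⟩ := (hmem t ht).2
    exact (huu' S S' hS hS').trans (hu'u'' S' S'' hS' hS'')

theorem stmt6 {n d : ℕ} (Γ : Subgroup (Equiv.Perm (Fin n))) (v w : Fin n → Fin d → ℝ)
    (hv : v ∈ SdSet n d Γ) (hw : w ∈ SdSet n d Γ)
    (hdeform : DeformEquiv Γ v w)
    (T T' : Γ → Matrix (Fin d) (Fin d) ℝ)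
    (hT : IsRepOf Γ T v) (hT' : IsRepOf Γ T' w) :
    PosIsoReps Γ T T' :=
  stmt6_general Γ v w hdeform T T' hT hT'
end

section
/- Let Γ be a group, let d be even, and let T, T̄ : Γ → O(ℝ^d) be irreducible representations that are isomorphic. Then either every equivariant linear map R between T and T̄ has det R ≤ 0, or every equivariant linear map R between T and T̄ has det R ≥ 0. In particular, any two invertible equivariant maps between T and T̄ have determinants of the same sign. -/
/-!
If `R, R'` are invertible equivariant maps from `T` to `T'`, then `X = R⁻¹ R'` commutes with
every `T g`. By Schur's lemma every element `(1 - t) • 1 + t • X` of the commutant is zero or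
invertible. If `X = c • 1` then `det X = c ^ d > 0` as `d` is even; otherwise the segment from
`1` to `X` stays inside `GL_d(ℝ)`, so `det X > 0` by the intermediate value theorem. Either way
`det R` and `det R'` have the same sign.
-/

open Matrix

/-- A representation of an abstract group `G` on `ℝ^d` by orthogonal matrices. -/
def IsRepG {d : ℕ} {G : Type*} [Group G] (T : G → Matrix (Fin d) (Fin d) ℝ) : Prop :=
  (∀ g, (T g)ᵀ * T g = 1) ∧ (∀ g h, T (g * h) = T g * T h)

/-- Irreducibility for a representation of an abstract group. -/
def IrredRepG {d : ℕ} {G : Type*} [Group G] (T : G → Matrix (Fin d) (Fin d) ℝ) : Prop :=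
  ∀ W : Submodule ℝ (Fin d → ℝ), (∀ (g : G), ∀ x ∈ W, (T g).mulVec x ∈ W) → W = ⊥ ∨ W = ⊤

/-- Isomorphy of representations of an abstract group. -/
def IsoRepsG {d : ℕ} {G : Type*} [Group G] (T T' : G → Matrix (Fin d) (Fin d) ℝ) : Prop :=
  ∃ R : Matrix (Fin d) (Fin d) ℝ, R.det ≠ 0 ∧ ∀ g, R * T g = T' g * R

/-- Positive isomorphy of representations of an abstract group. -/
def PosIsoRepsG {d : ℕ} {G : Type*} [Group G] (T T' : G → Matrix (Fin d) (Fin d) ℝ) : Prop :=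
  ∃ R : Matrix (Fin d) (Fin d) ℝ, 0 < R.det ∧ ∀ g, R * T g = T' g * R


lemma exists_eq_smul_one_of_smul_add_smul_eq_zero {A : Type*} [Ring A] [Algebra ℝ A] {x : A}
    {t : ℝ} (h : (1 - t) • (1 : A) + t • x = 0) : ∃ c : ℝ, x = c • 1 := by
  rcases eq_or_ne t 0 with rfl | ht
  · have h1 : (1 : A) = 0 := by simpa using h
    exact ⟨0, by rw [zero_smul, ← mul_one x, h1, mul_zero]⟩
  · refine ⟨(t - 1) / t, ?_⟩
    have hx : t • x = (t - 1) • (1 : A) := by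
      rw [← sub_eq_zero, sub_smul, one_smul, ← h]; module
    rw [div_eq_inv_mul, mul_smul, ← hx, smul_smul, inv_mul_cancel₀ ht, one_smul]

lemma Matrix.det_pos_of_det_lineMap_ne_zero {n : Type*} [Fintype n] [DecidableEq n]
    {X : Matrix n n ℝ} (hX : ∀ t : ℝ, ((1 - t) • 1 + t • X).det ≠ 0) : 0 < X.det := by
  have hcont : Continuous fun t : ℝ => ((1 - t) • (1 : Matrix n n ℝ) + t • X).det := by
    fun_prop
  by_contra! hneg
  obtain ⟨t, -, ht⟩ := intermediate_value_Icc' zero_le_one hcont.continuousOn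
    (show (0 : ℝ) ∈ Set.Icc _ _ by simpa using hneg)
  exact hX t ht

namespace IrredRepG

variable {d : ℕ} {G : Type*} [Group G] {T T' : G → Matrix (Fin d) (Fin d) ℝ}

theorem eq_zero_or_det_ne_zero (hT : IrredRepG T) {R : Matrix (Fin d) (Fin d) ℝ}
    (hR : ∀ g, R * T g = T' g * R) : R = 0 ∨ R.det ≠ 0 := by
  have hker : ∀ g, ∀ x ∈ LinearMap.ker R.mulVecLin, (T g).mulVec x ∈ LinearMap.ker R.mulVecLin := by
    intro g x hx
    simp only [LinearMap.mem_ker, mulVecLin_apply] at hx ⊢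
    rw [mulVec_mulVec, hR g, ← mulVec_mulVec, hx, mulVec_zero]
  rcases hT _ hker with h | h
  · right
    rw [← isUnit_iff_ne_zero, ← isUnit_iff_isUnit_det, ← mulVec_injective_iff_isUnit]
    exact LinearMap.ker_eq_bot.mp h
  · left
    exact toLin'.injective ((LinearMap.ker_eq_top.mp h).trans (map_zero _).symm)

theorem det_pos_of_commute (hd : Even d) (hT : IrredRepG T) {X : Matrix (Fin d) (Fin d) ℝ}
    (hX : ∀ g, Commute X (T g)) (hX0 : X.det ≠ 0) : 0 < X.det := by
  by_cases hscalar : ∃ c : ℝ, X = c • 1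
  · obtain ⟨c, rfl⟩ := hscalar
    rw [det_smul, det_one, mul_one, Fintype.card_fin] at hX0 ⊢
    exact (hd.pow_nonneg c).lt_of_ne' hX0
  · refine det_pos_of_det_lineMap_ne_zero fun t => ?_
    have hcomm : ∀ g, ((1 - t) • 1 + t • X) * T g = T g * ((1 - t) • 1 + t • X) := fun g =>
      (((Commute.one_left _).smul_left _).add_left ((hX g).smul_left t)).eq
    exact (hT.eq_zero_or_det_ne_zero hcomm).resolve_left
      fun h0 => hscalar (exists_eq_smul_one_of_smul_add_smul_eq_zero h0)

theorem det_pos_iff_of_equivariant (hd : Even d) (hT : IrredRepG T)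
    {R R' : Matrix (Fin d) (Fin d) ℝ} (hR : ∀ g, R * T g = T' g * R)
    (hR' : ∀ g, R' * T g = T' g * R') (hR0 : R.det ≠ 0) (hR'0 : R'.det ≠ 0) :
    0 < R.det ↔ 0 < R'.det := by
  have hRu : IsUnit R.det := hR0.isUnit
  have hRinv : ∀ g, R⁻¹ * T' g = T g * R⁻¹ := fun g => calc
    R⁻¹ * T' g = R⁻¹ * (T' g * R) * R⁻¹ := by
      rw [Matrix.mul_assoc, Matrix.mul_assoc, mul_nonsing_inv _ hRu, Matrix.mul_one]
    _ = T g * R⁻¹ := by rw [← hR g, nonsing_inv_mul_cancel_left _ _ hRu]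
  have hcomm : ∀ g, Commute (R⁻¹ * R') (T g) := fun g => by
    rw [Commute, SemiconjBy, Matrix.mul_assoc, hR' g, ← Matrix.mul_assoc, hRinv g,
      Matrix.mul_assoc]
  have hX0 : (R⁻¹ * R').det ≠ 0 := by
    rw [det_mul, det_nonsing_inv, Ring.inverse_eq_inv']
    exact mul_ne_zero (inv_ne_zero hR0) hR'0
  have hX := hT.det_pos_of_commute hd hcomm hX0
  rw [det_mul, det_nonsing_inv, Ring.inverse_eq_inv'] at hX
  rw [← inv_pos]
  exact pos_iff_pos_of_mul_pos hX

end IrredRepG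

theorem stmt9_general {d : ℕ} {G : Type*} [Group G] (hd : Even d)
    (T T' : G → Matrix (Fin d) (Fin d) ℝ)
    (hTirr : IrredRepG T)
    (hiso : IsoRepsG T T') :
    ((∀ R : Matrix (Fin d) (Fin d) ℝ, (∀ g, R * T g = T' g * R) → R.det ≤ 0) ∨
     (∀ R : Matrix (Fin d) (Fin d) ℝ, (∀ g, R * T g = T' g * R) → 0 ≤ R.det)) ∧
    (∀ R R' : Matrix (Fin d) (Fin d) ℝ,
      (∀ g, R * T g = T' g * R) → (∀ g, R' * T g = T' g * R') →
      R.det ≠ 0 → R'.det ≠ 0 → (0 < R.det ↔ 0 < R'.det)) := by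
  refine ⟨?_, fun _ _ => hTirr.det_pos_iff_of_equivariant hd⟩
  obtain ⟨R₀, hR₀0, hR₀⟩ := hiso
  rcases hR₀0.lt_or_gt with hneg | hpos
  · refine .inl fun R hR => not_lt.mp fun hRpos => ?_
    exact hneg.not_gt ((hTirr.det_pos_iff_of_equivariant hd hR hR₀ hRpos.ne' hR₀0).mp hRpos)
  · refine .inr fun R hR => ?_
    rcases eq_or_ne R.det 0 with hR0 | hR0
    · exact hR0.ge
    · exact ((hTirr.det_pos_iff_of_equivariant hd hR hR₀ hR0 hR₀0).mpr hpos).le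

theorem stmt9 {d : ℕ} {G : Type*} [Group G] (hd : Even d)
    (T T' : G → Matrix (Fin d) (Fin d) ℝ)
    (hT : IsRepG T) (hTirr : IrredRepG T)
    (hT' : IsRepG T') (hT'irr : IrredRepG T')
    (hiso : IsoRepsG T T') :
    ((∀ R : Matrix (Fin d) (Fin d) ℝ, (∀ g, R * T g = T' g * R) → R.det ≤ 0) ∨
     (∀ R : Matrix (Fin d) (Fin d) ℝ, (∀ g, R * T g = T' g * R) → 0 ≤ R.det)) ∧
    (∀ R R' : Matrix (Fin d) (Fin d) ℝ,
      (∀ g, R * T g = T' g * R) → (∀ g, R' * T g = T' g * R') →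
      R.det ≠ 0 → R'.det ≠ 0 → (0 < R.det ↔ 0 < R'.det)) :=
  stmt9_general hd T T' hTirr hiso
end
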